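/- With E, 𝓔 as above and additionally the constraint η_R + (K²/(4R³)) e^{2η} = a R E, define E_K = E + (K²/(4R⁴)) a^{-1} e^{2η} and 𝓔_K(R) = ∫_{S¹} E_K dθ. Then d𝓔_K/dR = −(K²/R⁵) ∫_{S¹} a^{-1} e^{2η} dθ − (2/R) ∫_{S¹} a^{-1} U_R² dθ, so 𝓔_K is non-increasing and ∫_{R₀}^∞ (K²/R⁵) ∫_{S¹} e^{2η} a^{-1} dθ dR ≤ 𝓔_K(R₀). -/

import Mathlib

/-!
Differentiating the modified energy density in `R` and eliminating `U_RR` by the wave equation,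
`a_R` by the equation for `ln a` and `η_R` by the constraint leaves
`-(K²/R⁵) a⁻¹ e^{2η} - (2/R) a⁻¹ U_R²` plus the `θ`-derivative of the flux `2 a U_θ U_R`, which
integrates to zero over a period. Differentiating under the integral sign gives the identity. Both
remaining terms are nonpositive, so `𝓔_K` is antitone, and integrating the derivative from `R₀`
to `R` while using `𝓔_K ≥ 0` bounds the spacetime integral by `𝓔_K(R₀)`.
-/

open Real MeasureTheory intervalIntegral Function Set

noncomputable def partialFst (f : ℝ → ℝ → ℝ) (r θ : ℝ) : ℝ := deriv (fun r => f r θ) r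

noncomputable def partialSnd (f : ℝ → ℝ → ℝ) (r θ : ℝ) : ℝ := deriv (f r) θ

section PartialDerivatives

variable {f : ℝ → ℝ → ℝ} {r θ : ℝ}

theorem hasDerivAt_fderiv_apply_fst (hf : DifferentiableAt ℝ (uncurry f) (r, θ)) :
    HasDerivAt (fun r => f r θ) (fderiv ℝ (uncurry f) (r, θ) (1, 0)) r := by
  simpa [comp_def] using
    hf.hasFDerivAt.comp_hasDerivAt r ((hasDerivAt_id r).prodMk (hasDerivAt_const r θ))

theorem hasDerivAt_fderiv_apply_snd (hf : DifferentiableAt ℝ (uncurry f) (r, θ)) :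
    HasDerivAt (f r) (fderiv ℝ (uncurry f) (r, θ) (0, 1)) θ := by
  simpa [comp_def] using
    hf.hasFDerivAt.comp_hasDerivAt θ ((hasDerivAt_const θ r).prodMk (hasDerivAt_id θ))

theorem partialFst_eq_fderiv (hf : DifferentiableAt ℝ (uncurry f) (r, θ)) :
    partialFst f r θ = fderiv ℝ (uncurry f) (r, θ) (1, 0) :=
  (hasDerivAt_fderiv_apply_fst hf).deriv

theorem partialSnd_eq_fderiv (hf : DifferentiableAt ℝ (uncurry f) (r, θ)) :
    partialSnd f r θ = fderiv ℝ (uncurry f) (r, θ) (0, 1) :=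
  (hasDerivAt_fderiv_apply_snd hf).deriv

theorem hasDerivAt_partialFst (hf : DifferentiableAt ℝ (uncurry f) (r, θ)) :
    HasDerivAt (fun r => f r θ) (partialFst f r θ) r :=
  partialFst_eq_fderiv hf ▸ hasDerivAt_fderiv_apply_fst hf

theorem hasDerivAt_partialSnd (hf : DifferentiableAt ℝ (uncurry f) (r, θ)) :
    HasDerivAt (f r) (partialSnd f r θ) θ :=
  partialSnd_eq_fderiv hf ▸ hasDerivAt_fderiv_apply_snd hf

theorem uncurry_partialFst_eq_fderiv (hf : Differentiable ℝ (uncurry f)) :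
    uncurry (partialFst f) = fun p => fderiv ℝ (uncurry f) p (1, 0) :=
  funext fun p => partialFst_eq_fderiv (hf p)

theorem uncurry_partialSnd_eq_fderiv (hf : Differentiable ℝ (uncurry f)) :
    uncurry (partialSnd f) = fun p => fderiv ℝ (uncurry f) p (0, 1) :=
  funext fun p => partialSnd_eq_fderiv (hf p)

theorem ContDiff.partialFst {m n : WithTop ℕ∞} (hf : ContDiff ℝ n (uncurry f))
    (hmn : m + 1 ≤ n) :
    ContDiff ℝ m (uncurry (_root_.partialFst f)) := by
  rw [uncurry_partialFst_eq_fderiv (hf.differentiable (ne_bot_of_le_ne_bot (by simp) hmn))]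
  exact (hf.fderiv_right hmn).clm_apply contDiff_const

theorem ContDiff.partialSnd {m n : WithTop ℕ∞} (hf : ContDiff ℝ n (uncurry f))
    (hmn : m + 1 ≤ n) :
    ContDiff ℝ m (uncurry (_root_.partialSnd f)) := by
  rw [uncurry_partialSnd_eq_fderiv (hf.differentiable (ne_bot_of_le_ne_bot (by simp) hmn))]
  exact (hf.fderiv_right hmn).clm_apply contDiff_const

theorem partialFst_partialSnd (hf : ContDiff ℝ 2 (uncurry f)) :
    partialFst (partialSnd f) r θ = partialSnd (partialFst f) r θ := by
  have hdiff := hf.differentiable two_ne_zero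
  have hdiff₂ := (hf.fderiv_right (m := 1) le_rfl).differentiable one_ne_zero (r, θ)
  rw [partialFst_eq_fderiv ((hf.partialSnd le_rfl).differentiable one_ne_zero _),
    partialSnd_eq_fderiv ((hf.partialFst le_rfl).differentiable one_ne_zero _),
    uncurry_partialSnd_eq_fderiv hdiff, uncurry_partialFst_eq_fderiv hdiff,
    fderiv_clm_apply hdiff₂ (differentiableAt_const _),
    fderiv_clm_apply hdiff₂ (differentiableAt_const _)]
  simpa using (hf.contDiffAt.isSymmSndFDerivAt (by simp)).eq (1, 0) (0, 1)

end PartialDerivatives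

theorem hasDerivAt_intervalIntegral_of_contDiffOn {F : ℝ → ℝ → ℝ} {s : Set ℝ} {x a b : ℝ}
    (hs : IsOpen s) (hF : ContDiffOn ℝ 1 (uncurry F) (s ×ˢ univ)) (hx : x ∈ s) :
    HasDerivAt (fun r => ∫ θ in a..b, F r θ) (∫ θ in a..b, partialFst F x θ) x := by
  have hopen : IsOpen (s ×ˢ (univ : Set ℝ)) := hs.prod isOpen_univ
  have hdiff : ∀ r ∈ s, ∀ θ, DifferentiableAt ℝ (uncurry F) (r, θ) := fun r hr θ =>
    (hF.differentiableOn one_ne_zero).differentiableAt (hopen.mem_nhds ⟨hr, trivial⟩)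
  have hslice : ∀ r ∈ s, Continuous (F r) := fun r hr =>
    hF.continuousOn.comp_continuous (.prodMk_right r) fun _ => ⟨hr, trivial⟩
  have hcont' : ContinuousOn (uncurry (partialFst F)) (s ×ˢ univ) := by
    refine ((hF.continuousOn_fderiv_of_isOpen hopen le_rfl).clm_apply
      (continuousOn_const (c := ((1 : ℝ), (0 : ℝ))))).congr ?_
    rintro ⟨r, θ⟩ ⟨hr, -⟩
    exact partialFst_eq_fderiv (hdiff r hr θ)
  obtain ⟨ε, hε, hball⟩ := Metric.isOpen_iff.1 hs x hx
  have hsub : Metric.closedBall x (ε / 2) ⊆ s :=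
    (Metric.closedBall_subset_ball (half_lt_self hε)).trans hball
  obtain ⟨C, hC⟩ := ((isCompact_closedBall x (ε / 2)).prod isCompact_uIcc
    ).exists_bound_of_continuousOn (hcont'.mono (prod_mono hsub (subset_univ (uIcc a b))))
  refine (hasDerivAt_integral_of_dominated_loc_of_deriv_le (bound := fun _ => C)
    (Metric.ball_mem_nhds x (half_pos hε)) ?_ ((hslice x hx).intervalIntegrable a b) ?_ ?_
    intervalIntegrable_const ?_).2
  · filter_upwards [hs.mem_nhds hx] with r hr using (hslice r hr).aestronglyMeasurable
  · exact (hcont'.comp_continuous (.prodMk_right x) fun _ => ⟨hx, trivial⟩).aestronglyMeasurable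
  · exact Filter.Eventually.of_forall fun θ hθ r hr =>
      hC (r, θ) ⟨Metric.ball_subset_closedBall hr, uIoc_subset_uIcc hθ⟩
  · exact Filter.Eventually.of_forall fun θ _ r hr =>
      hasDerivAt_partialFst (hdiff r (hsub (Metric.ball_subset_closedBall hr)) θ)

theorem Function.Periodic.deriv {f : ℝ → ℝ} {c : ℝ} (hf : Periodic f c) :
    Periodic (_root_.deriv f) c :=
  fun x => by rw [← deriv_comp_add_const, hf.funext]

theorem Function.Periodic.intervalIntegral_deriv_eq_zero {f : ℝ → ℝ} {c : ℝ} (hf : Periodic f c)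
    (hf1 : ContDiff ℝ 1 f) (a : ℝ) : ∫ x in a..a + c, _root_.deriv f x = 0 := by
  rw [integral_deriv_eq_sub (fun x _ => (hf1.differentiable one_ne_zero).differentiableAt)
    ((hf1.continuous_deriv le_rfl).intervalIntegrable _ _), hf a, sub_self]

theorem periodic_partialFst {f : ℝ → ℝ → ℝ} {c : ℝ} (hf : ∀ r, Periodic (f r) c) (r : ℝ) :
    Periodic (partialFst f r) c :=
  fun θ => by simp only [partialFst, (hf · θ)]

theorem integral_le_sub_of_hasDerivAt_of_le_neg {f f' φ : ℝ → ℝ} {a b : ℝ} (hab : a ≤ b)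
    (hf : ∀ x ∈ Icc a b, HasDerivAt f (f' x) x) (hφ : ContinuousOn φ (Icc a b))
    (hle : ∀ x ∈ Ioo a b, φ x ≤ -f' x) : ∫ x in a..b, φ x ≤ f a - f b := by
  have := integral_le_sub_of_hasDeriv_right_of_le hab
    (fun x hx => (hf x hx).continuousAt.continuousWithinAt.neg)
    (fun x hx => (hf x (Ioo_subset_Icc_self hx)).neg.hasDerivWithinAt) hφ.integrableOn_Icc hle
  simp only [Pi.neg_apply] at this
  linarith

noncomputable def energyDensity (U a : ℝ → ℝ → ℝ) (R θ : ℝ) : ℝ :=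
  (a R θ)⁻¹ * partialFst U R θ ^ 2 + a R θ * partialSnd U R θ ^ 2

noncomputable def modifiedEnergyDensity (K : ℝ) (U a η : ℝ → ℝ → ℝ) (R θ : ℝ) : ℝ :=
  energyDensity U a R θ + K ^ 2 / (4 * R ^ 4) * (a R θ)⁻¹ * exp (2 * η R θ)

noncomputable def energyFlux (U a : ℝ → ℝ → ℝ) (R θ : ℝ) : ℝ :=
  a R θ * partialSnd U R θ * partialFst U R θ

section Energy

variable {K : ℝ} {U a η : ℝ → ℝ → ℝ}

theorem modifiedEnergyDensity_nonneg {R θ : ℝ} (ha : 0 < a R θ) :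
    0 ≤ modifiedEnergyDensity K U a η R θ := by
  unfold modifiedEnergyDensity energyDensity
  positivity

theorem contDiffOn_modifiedEnergyDensity {n : WithTop ℕ∞} (hU : ContDiff ℝ (n + 1) (uncurry U))
    (ha : ContDiff ℝ n (uncurry a)) (hη : ContDiff ℝ n (uncurry η)) (ha0 : ∀ R θ, a R θ ≠ 0) :
    ContDiffOn ℝ n (uncurry (modifiedEnergyDensity K U a η)) ({0}ᶜ ×ˢ univ) := by
  have hainv : ContDiff ℝ n fun p : ℝ × ℝ => (a p.1 p.2)⁻¹ := ha.inv fun p => ha0 p.1 p.2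
  have hV : ContDiff ℝ n fun p : ℝ × ℝ => partialFst U p.1 p.2 := hU.partialFst le_rfl
  have hW : ContDiff ℝ n fun p : ℝ × ℝ => partialSnd U p.1 p.2 := hU.partialSnd le_rfl
  have hE : ContDiff ℝ n (uncurry (energyDensity U a)) :=
    (hainv.mul (hV.pow 2)).add (ha.mul (hW.pow 2))
  have hR : ContDiffOn ℝ n (fun p : ℝ × ℝ => K ^ 2 / (4 * p.1 ^ 4)) ({0}ᶜ ×ˢ univ) :=
    contDiffOn_const.div (contDiffOn_const.mul (contDiffOn_fst.pow 4))
      fun p hp => mul_ne_zero four_ne_zero (pow_ne_zero 4 hp.1)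
  exact hE.contDiffOn.add ((hR.mul hainv.contDiffOn).mul (contDiff_const.mul hη).exp.contDiffOn)

theorem periodic_energyFlux {c : ℝ} (hU : ∀ R, Periodic (U R) c) (ha : ∀ R, Periodic (a R) c)
    (R : ℝ) : Periodic (energyFlux U a R) c := fun θ => by
  simp only [energyFlux, partialSnd, ha R θ, (hU R).deriv θ, periodic_partialFst hU R θ]

theorem partialFst_modifiedEnergyDensity {R θ : ℝ} (hU : ContDiff ℝ 2 (uncurry U))
    (ha : DifferentiableAt ℝ (uncurry a) (R, θ)) (hη : DifferentiableAt ℝ (uncurry η) (R, θ))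
    (hR : R ≠ 0) (ha0 : a R θ ≠ 0)
    (hwave : deriv (fun r => r * (a r θ)⁻¹ * partialFst U r θ) R
      = deriv (fun t => R * a R t * partialSnd U R t) θ)
    (haeq : deriv (fun r => 2 * log (a r θ)) R = -(K ^ 2 / R ^ 3) * exp (2 * η R θ))
    (hηeq : partialFst η R θ + K ^ 2 / (4 * R ^ 3) * exp (2 * η R θ)
      = a R θ * R * energyDensity U a R θ) :
    partialFst (modifiedEnergyDensity K U a η) R θ
      = -(K ^ 2 / R ^ 5) * ((a R θ)⁻¹ * exp (2 * η R θ))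
        - 2 / R * ((a R θ)⁻¹ * partialFst U R θ ^ 2) + 2 * partialSnd (energyFlux U a) R θ := by
  have hV := (hU.partialFst (m := 1) le_rfl).differentiable one_ne_zero (R, θ)
  have hW := (hU.partialSnd (m := 1) le_rfl).differentiable one_ne_zero (R, θ)
  have ha_R := hasDerivAt_partialFst ha
  have ha_θ := hasDerivAt_partialSnd ha
  have hV_R := hasDerivAt_partialFst hV
  have hV_θ := hasDerivAt_partialSnd hV
  have hW_R := hasDerivAt_partialFst hW
  have hW_θ := hasDerivAt_partialSnd hW
  have hdensity : HasDerivAt (fun r => modifiedEnergyDensity K U a η r θ) _ R :=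
    (((ha_R.fun_inv ha0).fun_mul (hV_R.fun_pow 2)).add (ha_R.fun_mul (hW_R.fun_pow 2))).add
      ((((hasDerivAt_const R (K ^ 2)).fun_div ((hasDerivAt_pow 4 R).const_mul 4)
        (mul_ne_zero four_ne_zero (pow_ne_zero 4 hR))).fun_mul (ha_R.fun_inv ha0)).fun_mul
        ((hasDerivAt_partialFst hη).const_mul 2).exp)
  have hflux : HasDerivAt (energyFlux U a R) _ θ := (ha_θ.fun_mul hW_θ).fun_mul hV_θ
  rw [(((hasDerivAt_id' R).fun_mul (ha_R.fun_inv ha0)).fun_mul hV_R).deriv,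
    (((hasDerivAt_const θ R).fun_mul ha_θ).fun_mul hW_θ).deriv] at hwave
  rw [((ha_R.log ha0).const_mul 2).deriv] at haeq
  rw [partialFst, hdensity.deriv, show partialSnd (energyFlux U a) R θ = _ from hflux.deriv,
    partialFst_partialSnd hU]
  unfold energyDensity at hηeq
  -- the coefficients solve the wave equation for `U_RR`, the `ln a` equation for `a_R`
  -- and the constraint for `η_R`
  linear_combination (norm := skip) (2 * partialFst U R θ / R) * hwave
    + (energyDensity U a R θ / 2 - K ^ 2 * exp (2 * η R θ) / (8 * R ^ 4 * a R θ)) * haeq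
    + (K ^ 2 * exp (2 * η R θ) / (2 * R ^ 4 * a R θ)) * hηeq
  unfold energyDensity
  field_simp
  ring

theorem hasDerivAt_modifiedEnergy {c R : ℝ} (hU : ContDiff ℝ 2 (uncurry U))
    (ha : ContDiff ℝ 1 (uncurry a)) (hη : ContDiff ℝ 1 (uncurry η)) (ha0 : ∀ R θ, a R θ ≠ 0)
    (hUper : ∀ R, Periodic (U R) c) (haper : ∀ R, Periodic (a R) c) (hR : R ≠ 0)
    (hwave : ∀ θ, deriv (fun r => r * (a r θ)⁻¹ * partialFst U r θ) R
      = deriv (fun t => R * a R t * partialSnd U R t) θ)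
    (haeq : ∀ θ, deriv (fun r => 2 * log (a r θ)) R = -(K ^ 2 / R ^ 3) * exp (2 * η R θ))
    (hηeq : ∀ θ, partialFst η R θ + K ^ 2 / (4 * R ^ 3) * exp (2 * η R θ)
      = a R θ * R * energyDensity U a R θ) :
    HasDerivAt (fun r => ∫ θ in 0..c, modifiedEnergyDensity K U a η r θ)
      (-(K ^ 2 / R ^ 5) * (∫ θ in 0..c, (a R θ)⁻¹ * exp (2 * η R θ))
        - 2 / R * ∫ θ in 0..c, (a R θ)⁻¹ * partialFst U R θ ^ 2) R := by
  have hV := hU.partialFst (m := 1) le_rfl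
  have hflux : ContDiff ℝ 1 (uncurry (energyFlux U a)) := (ha.mul (hU.partialSnd le_rfl)).mul hV
  have hinv : Continuous fun p : ℝ × ℝ => (a p.1 p.2)⁻¹ :=
    ha.continuous.inv₀ fun p => ha0 p.1 p.2
  have hVc : Continuous fun p : ℝ × ℝ => partialFst U p.1 p.2 := hV.continuous
  have hηc : Continuous fun p : ℝ × ℝ => η p.1 p.2 := hη.continuous
  have hslice {g : ℝ → ℝ → ℝ} (hg : Continuous (uncurry g)) :
      IntervalIntegrable (g R) volume 0 c :=
    (hg.comp (.prodMk_right R)).intervalIntegrable 0 c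
  have hI₁ := (hslice (g := fun r θ => (a r θ)⁻¹ * exp (2 * η r θ)) (by fun_prop)).const_mul
    (-(K ^ 2 / R ^ 5))
  have hI₂ := (hslice (g := fun r θ => (a r θ)⁻¹ * partialFst U r θ ^ 2) (by fun_prop)).const_mul
    (2 / R)
  have hI₃ := (hslice (hflux.partialSnd (m := 0) (zero_add _).le).continuous).const_mul 2
  have hflux_zero : ∫ θ in 0..c, partialSnd (energyFlux U a) R θ = 0 := by
    have := (periodic_energyFlux hUper haper R).intervalIntegral_deriv_eq_zero
      (hflux.comp (contDiff_const.prodMk contDiff_id)) 0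
    rwa [zero_add] at this
  convert hasDerivAt_intervalIntegral_of_contDiffOn isOpen_compl_singleton
    (contDiffOn_modifiedEnergyDensity (K := K) hU ha hη ha0) hR using 1
  rw [integral_congr fun θ _ => (partialFst_modifiedEnergyDensity hU
    (ha.differentiable one_ne_zero _) (hη.differentiable one_ne_zero _) hR (ha0 R θ) (hwave θ)
    (haeq θ) (hηeq θ)), integral_add (hI₁.sub hI₂) hI₃, integral_sub hI₁ hI₂,
    intervalIntegral.integral_const_mul, intervalIntegral.integral_const_mul,
    intervalIntegral.integral_const_mul, hflux_zero]
  ring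

theorem antitoneOn_and_integral_le_of_dissipation {𝓔 : ℝ → ℝ} {V : ℝ → ℝ → ℝ} {c R₀ : ℝ}
    (hR₀ : 0 < R₀) (hc : 0 ≤ c) (ha : Continuous (uncurry a)) (hη : Continuous (uncurry η))
    (hapos : ∀ R θ, 0 < a R θ) (h𝓔 : ∀ R ∈ Ici R₀, 0 ≤ 𝓔 R)
    (hderiv : ∀ R ∈ Ici R₀, HasDerivAt 𝓔
      (-(K ^ 2 / R ^ 5) * (∫ θ in 0..c, (a R θ)⁻¹ * exp (2 * η R θ))
        - 2 / R * ∫ θ in 0..c, (a R θ)⁻¹ * V R θ ^ 2) R) :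
    AntitoneOn 𝓔 (Ici R₀) ∧ ∀ R ∈ Ici R₀,
      (∫ r in R₀..R, K ^ 2 / r ^ 5 * ∫ θ in 0..c, exp (2 * η r θ) * (a r θ)⁻¹) ≤ 𝓔 R₀ := by
  set φ := fun r => K ^ 2 / r ^ 5 * ∫ θ in 0..c, exp (2 * η r θ) * (a r θ)⁻¹
  set ψ := fun r => 2 / r * ∫ θ in 0..c, (a r θ)⁻¹ * V r θ ^ 2
  have hderiv' (R : ℝ) (hR : R ∈ Ici R₀) : HasDerivAt 𝓔 (-φ R - ψ R) R := by
    convert hderiv R hR using 1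
    simp only [φ, ψ, mul_comm (exp _)]
    ring
  have hφψ (R : ℝ) (hR : R ∈ Ici R₀) : 0 ≤ φ R ∧ 0 ≤ ψ R := by
    have := hR₀.trans_le hR
    refine ⟨mul_nonneg (by positivity) (integral_nonneg hc fun θ _ => ?_),
      mul_nonneg (by positivity) (integral_nonneg hc fun θ _ => ?_)⟩ <;>
    · have := hapos R θ
      positivity
  have hφc : ContinuousOn φ (Ici R₀) :=
    (continuousOn_const.div (continuousOn_pow 5) fun r hr => (pow_pos (hR₀.trans_le hr) 5).ne').mul
      (continuous_parametric_intervalIntegral_of_continuous'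
        ((continuous_const.mul hη).rexp.mul (ha.inv₀ fun p => (hapos p.1 p.2).ne')) _ _
        ).continuousOn
  refine ⟨antitoneOn_of_hasDerivWithinAt_nonpos (convex_Ici R₀)
    (fun R hR => (hderiv' R hR).continuousAt.continuousWithinAt)
    (fun R hR => (hderiv' R (interior_subset hR)).hasDerivWithinAt) fun R hR => ?_, fun R hR => ?_⟩
  · linarith [hφψ R (interior_subset hR)]
  calc _ ≤ _ := integral_le_sub_of_hasDerivAt_of_le_neg hR (fun r hr => hderiv' r hr.1)
        (hφc.mono Icc_subset_Ici_self) fun r hr => by linarith [hφψ r (Ioo_subset_Icc_self hr).1]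
    _ ≤ _ := sub_le_self _ (h𝓔 R hR)

end Energy

theorem modified_energy_identity_general
    (K R₀ : ℝ) (hR₀ : 0 < R₀)
    (U a η : ℝ → ℝ → ℝ)
    (hU : ContDiff ℝ (⊤ : ℕ∞) (fun p : ℝ × ℝ => U p.1 p.2))
    (ha : ContDiff ℝ (⊤ : ℕ∞) (fun p : ℝ × ℝ => a p.1 p.2))
    (hη : ContDiff ℝ (⊤ : ℕ∞) (fun p : ℝ × ℝ => η p.1 p.2))
    (hapos : ∀ R θ, 0 < a R θ)
    (hUper : ∀ R, Function.Periodic (U R) (2 * π))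
    (haper : ∀ R, Function.Periodic (a R) (2 * π))
    (hwave : ∀ R ∈ Set.Ici R₀, ∀ θ,
      deriv (fun r => r * (a r θ)⁻¹ * deriv (fun r' => U r' θ) r) R
        = deriv (fun t => R * a R t * deriv (U R) t) θ)
    (haeq : ∀ R ∈ Set.Ici R₀, ∀ θ,
      deriv (fun r => 2 * Real.log (a r θ)) R = -(K ^ 2 / R ^ 3) * Real.exp (2 * η R θ))
    (E : ℝ → ℝ → ℝ)
    (hE : ∀ R θ, E R θ
      = (a R θ)⁻¹ * (deriv (fun r => U r θ) R) ^ 2 + a R θ * (deriv (U R) θ) ^ 2)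
    (hηR : ∀ R ∈ Set.Ici R₀, ∀ θ,
      deriv (fun r => η r θ) R + K ^ 2 / (4 * R ^ 3) * Real.exp (2 * η R θ)
        = a R θ * R * E R θ)
    (EK : ℝ → ℝ → ℝ)
    (hEK : ∀ R θ, EK R θ
      = E R θ + K ^ 2 / (4 * R ^ 4) * (a R θ)⁻¹ * Real.exp (2 * η R θ))
    (𝓔K : ℝ → ℝ) (h𝓔K : ∀ R, 𝓔K R = ∫ θ in (0:ℝ)..(2 * π), EK R θ) :
    (∀ R ∈ Set.Ici R₀,
      deriv 𝓔K R
        = -(K ^ 2 / R ^ 5) * (∫ θ in (0:ℝ)..(2 * π), (a R θ)⁻¹ * Real.exp (2 * η R θ))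
          - (2 / R) * ∫ θ in (0:ℝ)..(2 * π), (a R θ)⁻¹ * (deriv (fun r => U r θ) R) ^ 2)
    ∧ AntitoneOn 𝓔K (Set.Ici R₀)
    ∧ ∀ R ∈ Set.Ici R₀,
        (∫ r in R₀..R, K ^ 2 / r ^ 5 *
          ∫ θ in (0:ℝ)..(2 * π), Real.exp (2 * η r θ) * (a r θ)⁻¹) ≤ 𝓔K R₀ := by
  obtain rfl : E = energyDensity U a := funext fun R => funext (hE R)
  obtain rfl : EK = modifiedEnergyDensity K U a η := funext fun R => funext (hEK R)
  obtain rfl : 𝓔K = fun R => ∫ θ in (0:ℝ)..(2 * π), modifiedEnergyDensity K U a η R θ :=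
    funext h𝓔K
  have hsmooth {n : ℕ} {f : ℝ → ℝ → ℝ} (hf : ContDiff ℝ (⊤ : ℕ∞) (uncurry f)) :
      ContDiff ℝ n (uncurry f) :=
    hf.of_le (WithTop.coe_le_coe.2 le_top)
  have hderiv (R : ℝ) (hR : R ∈ Ici R₀) := hasDerivAt_modifiedEnergy (K := K) (hsmooth hU)
    (hsmooth ha) (hsmooth hη) (fun R θ => (hapos R θ).ne') hUper haper (hR₀.trans_le hR).ne'
    (hwave R hR) (haeq R hR) (hηR R hR)
  exact ⟨fun R hR => (hderiv R hR).deriv, antitoneOn_and_integral_le_of_dissipation hR₀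
    two_pi_pos.le ha.continuous hη.continuous hapos
    (fun R _ => integral_nonneg two_pi_pos.le fun θ _ => modifiedEnergyDensity_nonneg (hapos R θ))
    hderiv⟩

/-- Identity and monotonicity for the modified energy
`𝓔_K(R) = ∫_{S¹} (E + (K²/(4R⁴)) a⁻¹ e^{2η}) dθ`:
`d𝓔_K/dR = −(K²/R⁵) ∫ a⁻¹ e^{2η} − (2/R) ∫ a⁻¹ U_R²`, so `𝓔_K` is
non-increasing and the spacetime integral `∫_{R₀}^∞ (K²/R⁵) ∫ e^{2η} a⁻¹`
is bounded by `𝓔_K(R₀)`. -/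
theorem modified_energy_identity
    (K R₀ : ℝ) (hR₀ : 0 < R₀)
    (U a η : ℝ → ℝ → ℝ)
    (hU : ContDiff ℝ (⊤ : ℕ∞) (fun p : ℝ × ℝ => U p.1 p.2))
    (ha : ContDiff ℝ (⊤ : ℕ∞) (fun p : ℝ × ℝ => a p.1 p.2))
    (hη : ContDiff ℝ (⊤ : ℕ∞) (fun p : ℝ × ℝ => η p.1 p.2))
    (hapos : ∀ R θ, 0 < a R θ)
    (hUper : ∀ R, Function.Periodic (U R) (2 * π))
    (haper : ∀ R, Function.Periodic (a R) (2 * π))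
    (hηper : ∀ R, Function.Periodic (η R) (2 * π))
    (hwave : ∀ R ∈ Set.Ici R₀, ∀ θ,
      deriv (fun r => r * (a r θ)⁻¹ * deriv (fun r' => U r' θ) r) R
        = deriv (fun t => R * a R t * deriv (U R) t) θ)
    (haeq : ∀ R ∈ Set.Ici R₀, ∀ θ,
      deriv (fun r => 2 * Real.log (a r θ)) R = -(K ^ 2 / R ^ 3) * Real.exp (2 * η R θ))
    (E : ℝ → ℝ → ℝ)
    (hE : ∀ R θ, E R θ
      = (a R θ)⁻¹ * (deriv (fun r => U r θ) R) ^ 2 + a R θ * (deriv (U R) θ) ^ 2)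
    (hηR : ∀ R ∈ Set.Ici R₀, ∀ θ,
      deriv (fun r => η r θ) R + K ^ 2 / (4 * R ^ 3) * Real.exp (2 * η R θ)
        = a R θ * R * E R θ)
    (hηθ : ∀ R ∈ Set.Ici R₀, ∀ θ,
      deriv (η R) θ = 2 * R * deriv (fun r => U r θ) R * deriv (U R) θ)
    (EK : ℝ → ℝ → ℝ)
    (hEK : ∀ R θ, EK R θ
      = E R θ + K ^ 2 / (4 * R ^ 4) * (a R θ)⁻¹ * Real.exp (2 * η R θ))
    (𝓔K : ℝ → ℝ) (h𝓔K : ∀ R, 𝓔K R = ∫ θ in (0:ℝ)..(2 * π), EK R θ) :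
    (∀ R ∈ Set.Ici R₀,
      deriv 𝓔K R
        = -(K ^ 2 / R ^ 5) * (∫ θ in (0:ℝ)..(2 * π), (a R θ)⁻¹ * Real.exp (2 * η R θ))
          - (2 / R) * ∫ θ in (0:ℝ)..(2 * π), (a R θ)⁻¹ * (deriv (fun r => U r θ) R) ^ 2)
    ∧ AntitoneOn 𝓔K (Set.Ici R₀)
    ∧ ∀ R ∈ Set.Ici R₀,
        (∫ r in R₀..R, K ^ 2 / r ^ 5 *
          ∫ θ in (0:ℝ)..(2 * π), Real.exp (2 * η r θ) * (a r θ)⁻¹) ≤ 𝓔K R₀ :=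
  modified_energy_identity_general K R₀ hR₀ U a η hU ha hη hapos hUper haper hwave haeq E hE hηR EK
    hEK 𝓔K h𝓔K
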